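/- On each interval [i/2^L, (i+1)/2^L], the shifted sawtooth approximation F^L(x) − 2^{−2L−2} is affine and coincides with the tangent line to x² at the midpoint i/2^L + 1/2^{L+1}. -/

import Mathlib

/-- The tooth function `G(x) = min (2x) (2(1-x))`. -/
noncomputable def sawG (x : ℝ) : ℝ := min (2 * x) (2 * (1 - x))

/-- The sawtooth approximation `F^L(x) = x - ∑_{j=1}^L 2^{-2j} G^j(x)`. -/
noncomputable def sawF (L : ℕ) (x : ℝ) : ℝ :=
  x - ∑ j ∈ Finset.Icc 1 L, (2 : ℝ) ^ (-(2 * (j : ℤ))) * sawG^[j] x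

/-!
In the coordinate `t = 2^L x`, the iterate `G^L` is the tooth `sawTent i` on each unit interval
`[i, i+1]`, rising for even `i` and falling for odd `i`: applying `G` once more halves the
intervals. Subtracting `4^{-(L+1)} G^{L+1}` then turns the chord `unitChord j` of `t ↦ t²` over
`[j, j+1]` into the chords over its two halves, so by induction `F^L` interpolates `x²`
linearly at the dyadic points `i/2^L`. Over `[a, a+h]` that chord is `(2a+h)x - a(a+h)`, which exceeds the
tangent at the midpoint by `h²/4 = 2^{-2L-2}`.
-/

open Set

def sawTent (i : ℕ) (t : ℝ) : ℝ := if Even i then t - i else i + 1 - t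

def unitChord (i : ℕ) (t : ℝ) : ℝ := (2 * i + 1) * t - i * (i + 1)

lemma half_mem_Icc_div_two {i : ℕ} {t : ℝ} (ht : t ∈ Icc (i : ℝ) (i + 1)) :
    t / 2 ∈ Icc ((i / 2 : ℕ) : ℝ) ((i / 2 : ℕ) + 1) := by
  obtain ⟨j, rfl | rfl⟩ := Nat.even_or_odd' i <;>
  · simp only [mem_Icc] at ht ⊢
    push_cast at ht
    rw [show (_ : ℕ) / 2 = j by omega]
    constructor <;> linarith

lemma sawG_sawTent_half {i : ℕ} {t : ℝ} (ht : t ∈ Icc (i : ℝ) (i + 1)) :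
    sawG (sawTent (i / 2) (t / 2)) = sawTent i t := by
  obtain ⟨ht₁, ht₂⟩ := ht
  obtain ⟨j, rfl | rfl⟩ := Nat.even_or_odd' i <;>
  · rw [show (_ : ℕ) / 2 = j by omega]
    by_cases hj : Even j <;>
    · simp only [sawTent, sawG, min_def, hj, even_two, Even.mul_right, Nat.not_even_bit1,
        ↓reduceIte, Nat.cast_add, Nat.cast_mul, Nat.cast_ofNat,
        Nat.cast_one] at ht₁ ht₂ ⊢
      split_ifs <;> linarith

lemma two_pow_succ_mul_div_two (L : ℕ) (x : ℝ) : 2 ^ (L + 1) * x / 2 = 2 ^ L * x := by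
  rw [pow_succ]
  ring

lemma sawG_iterate_eq_sawTent {L i : ℕ} (hi : i < 2 ^ L) {x : ℝ}
    (hx : 2 ^ L * x ∈ Icc (i : ℝ) (i + 1)) : sawG^[L] x = sawTent i (2 ^ L * x) := by
  induction L generalizing i with
  | zero =>
    obtain rfl : i = 0 := by simpa using hi
    simp [sawTent]
  | succ L ih =>
    have hhalf := half_mem_Icc_div_two hx
    rw [two_pow_succ_mul_div_two] at hhalf
    rw [Function.iterate_succ_apply', ih (by omega) hhalf, ← sawG_sawTent_half hx,
      two_pow_succ_mul_div_two]

lemma four_mul_unitChord_half_sub_sawTent (i : ℕ) (t : ℝ) :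
    4 * unitChord (i / 2) (t / 2) - sawTent i t = unitChord i t := by
  obtain ⟨j, rfl | rfl⟩ := Nat.even_or_odd' i <;>
  · rw [show (_ : ℕ) / 2 = j by omega]
    simp only [unitChord, sawTent, even_two, Even.mul_right, Nat.not_even_bit1, ↓reduceIte,
      Nat.cast_add, Nat.cast_mul, Nat.cast_ofNat, Nat.cast_one]
    ring

lemma two_zpow_neg_two_mul (j : ℕ) : (2 : ℝ) ^ (-(2 * (j : ℤ))) = ((2 ^ j) ^ 2)⁻¹ := by
  rw [zpow_neg, mul_comm, zpow_mul, zpow_natCast, zpow_ofNat]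

lemma sawF_succ (L : ℕ) (x : ℝ) :
    sawF (L + 1) x = sawF L x - ((2 ^ (L + 1)) ^ 2)⁻¹ * sawG^[L + 1] x := by
  rw [sawF, sawF, Finset.sum_Icc_succ_top (by omega), two_zpow_neg_two_mul]
  ring

theorem sawF_eq_unitChord {L i : ℕ} (hi : i < 2 ^ L) {x : ℝ}
    (hx : 2 ^ L * x ∈ Icc (i : ℝ) (i + 1)) :
    sawF L x = unitChord i (2 ^ L * x) / (2 ^ L) ^ 2 := by
  induction L generalizing i with
  | zero =>
    obtain rfl : i = 0 := by simpa using hi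
    simp [sawF, unitChord]
  | succ L ih =>
    have hhalf := half_mem_Icc_div_two hx
    rw [two_pow_succ_mul_div_two] at hhalf
    have hchord := four_mul_unitChord_half_sub_sawTent i (2 ^ (L + 1) * x)
    rw [two_pow_succ_mul_div_two] at hchord
    rw [sawF_succ, ih (by omega) hhalf, sawG_iterate_eq_sawTent hi hx, ← hchord, pow_succ]
    field_simp
    ring

/-- On each interval `[i/2^L, (i+1)/2^L]`, the shifted sawtooth approximation
`F^L(x) - 2^{-2L-2}` coincides with the tangent line `x ↦ 2mx - m²` to `x²`
at the midpoint `m = i/2^L + 1/2^{L+1}`; in particular it is affine there. -/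
theorem sawF_shifted_tangent (L i : ℕ) (hi : i < 2 ^ L) (x : ℝ)
    (hx : x ∈ Set.Icc ((i : ℝ) / 2 ^ L) (((i : ℝ) + 1) / 2 ^ L)) :
    sawF L x - (2 : ℝ) ^ (-(2 * (L : ℤ)) - 2) =
      2 * ((i : ℝ) / 2 ^ L + 1 / 2 ^ (L + 1)) * x -
        ((i : ℝ) / 2 ^ L + 1 / 2 ^ (L + 1)) ^ 2 := by
  rw [← preimage_const_mul_Icc₀ _ _ (by positivity : (0 : ℝ) < 2 ^ L)] at hx
  have hshift : (2 : ℝ) ^ (-(2 * (L : ℤ)) - 2) = ((2 ^ L) ^ 2)⁻¹ / 4 := by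
    rw [sub_eq_add_neg, zpow_add₀ two_ne_zero, two_zpow_neg_two_mul]
    norm_num [div_eq_mul_inv]
  rw [sawF_eq_unitChord hi hx, hshift, unitChord, pow_succ]
  field_simp
  ring
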